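/- arXiv:1804.04246 — 2 statements merged into one kernel-verified Lean document; each statement's English description precedes it below -/
import Mathlib

section
/- Let K be an algebraic number field. For any natural number R, Σ_{𝔲 ⊆ O_K, 0 < |𝔲| ≤ R} 1/|𝔲| ≪_K log R, where the sum is over all non-zero integral ideals 𝔲 of O_K of absolute norm at most R. -/
/-!
Let `A(m)` be the number of ideals of norm at most `m`. Summation by parts gives
`∑_{0 < |𝔲| ≤ R} 1/|𝔲| = A(R)/R + ∑_{1 ≤ m < R} A(m) (1/m - 1/(m+1))`, and the ideal-counting
asymptotic (`A(s)/s` converges) makes `A(m) ≪_K m`, so the sum is `≪_K 1 + ∑_{1 ≤ m < R} 1/(m+1)`,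
which is at most `1 + log R`.
-/

open NumberField Filter Topology

open Finset

theorem one_div_eq_one_div_add_sum_Ico {a R : ℕ} (haR : a ≤ R) :
    (1 : ℝ) / a = 1 / R + ∑ m ∈ Ico a R, (1 / (m : ℝ) - 1 / (m + 1)) := by
  have := Finset.sum_Ico_sub (f := fun m : ℕ ↦ -(1 : ℝ) / m) haR
  simp only [Nat.cast_add, Nat.cast_one] at this
  rw [show ∑ m ∈ Ico a R, (1 / (m : ℝ) - 1 / (m + 1))
    = ∑ m ∈ Ico a R, (-1 / ((m : ℝ) + 1) - -1 / m) from
      Finset.sum_congr rfl fun _ _ ↦ by ring, this]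
  ring

theorem sum_Ico_one_div_succ_le_log (R : ℕ) :
    ∑ m ∈ Ico 1 R, (1 : ℝ) / (m + 1) ≤ Real.log R := by
  rcases Nat.eq_zero_or_pos R with rfl | hR
  · simp
  have hharm : (harmonic R : ℝ) = 1 + ∑ m ∈ Ico 1 R, (1 : ℝ) / (m + 1) := by
    rw [harmonic, range_eq_Ico, sum_eq_sum_Ico_succ_bot hR]
    push_cast
    simp [one_div]
  linarith [harmonic_le_one_add_log R]

theorem sum_one_div_le_of_card_filter_le {ι : Type*} (s : Finset ι) (f : ι → ℕ) {C : ℝ}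
    {R : ℕ} (hR : 1 ≤ R) (hf : ∀ i ∈ s, 0 < f i ∧ f i ≤ R)
    (hcount : ∀ m, 1 ≤ m → m ≤ R → (#{i ∈ s | f i ≤ m} : ℝ) ≤ C * m) :
    ∑ i ∈ s, (1 : ℝ) / f i ≤ C * (1 + Real.log R) := by
  set δ : ℕ → ℝ := fun m ↦ 1 / (m : ℝ) - 1 / (m + 1)
  have hsplit : ∀ i ∈ s, (1 : ℝ) / f i = 1 / R + ∑ m ∈ Ico 1 R, if f i ≤ m then δ m else 0 := by
    intro i hi
    rw [one_div_eq_one_div_add_sum_Ico (hf i hi).2, ← sum_filter]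
    congr 2
    ext m
    simp only [mem_Ico, mem_filter]
    have := (hf i hi).1
    omega
  have hcard : (#s : ℝ) = #{i ∈ s | f i ≤ R} := by
    rw [filter_true_of_mem fun i hi ↦ (hf i hi).2]
  have hR0 : (0 : ℝ) < R := by exact_mod_cast hR
  calc ∑ i ∈ s, (1 : ℝ) / f i
      = #s / R + ∑ m ∈ Ico 1 R, #{i ∈ s | f i ≤ m} * δ m := by
        rw [sum_congr rfl hsplit, sum_add_distrib, sum_comm, sum_const, nsmul_eq_mul, mul_one_div]
        congr 1
        refine sum_congr rfl fun m _ ↦ ?_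
        rw [← sum_filter, sum_const, nsmul_eq_mul]
    _ ≤ C + ∑ m ∈ Ico 1 R, C * m * δ m := by
        gcongr with m hm
        · rw [div_le_iff₀ hR0, hcard]
          exact hcount R hR le_rfl
        · have := (mem_Ico.mp hm).1
          simp only [δ]
          rw [sub_nonneg]
          gcongr
          linarith
        · exact hcount m (mem_Ico.mp hm).1 (mem_Ico.mp hm).2.le
    _ = C * (1 + ∑ m ∈ Ico 1 R, (1 : ℝ) / (m + 1)) := by
        rw [mul_add, mul_one, mul_sum]
        congr 1
        refine sum_congr rfl fun m hm ↦ ?_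
        have : (m : ℝ) ≠ 0 := by have := (mem_Ico.mp hm).1; positivity
        simp only [δ]
        field_simp
        ring
    _ ≤ C * (1 + Real.log R) := by
        have hC : 0 ≤ C := by simpa using (Nat.cast_nonneg _).trans (hcount 1 le_rfl hR)
        gcongr
        exact sum_Ico_one_div_succ_le_log R

theorem NumberField.exists_ncard_absNorm_le_le_mul (K : Type*) [Field K] [NumberField K] :
    ∃ C > 0, ∀ n : ℕ, 1 ≤ n → ({I : Ideal (𝓞 K) | Ideal.absNorm I ≤ n}.ncard : ℝ) ≤ C * n := by
  obtain ⟨C, hC⟩ := ((Ideal.tendsto_norm_le_div_atTop K).comp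
    tendsto_natCast_atTop_atTop).bddAbove_range
  refine ⟨max C 1, by positivity, fun n hn ↦ ?_⟩
  have hn0 : (0 : ℝ) < n := by exact_mod_cast hn
  have := hC ⟨n, rfl⟩
  simp only [Function.comp_apply, Nat.cast_le, div_le_iff₀ hn0] at this
  rw [← Nat.card_coe_set_eq]
  exact this.trans (by gcongr; exact le_max_left _ _)

/-- **Ideal-counting version of Mertens' first estimate**: the sum of `1/|𝔲|` over non-zero
integral ideals of norm at most `R` is `≪_K log R`. -/
theorem sum_inv_norm_ideals_le
    (K : Type) [Field K] [NumberField K] :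
    ∃ c > 0, ∀ R : ℕ, 2 ≤ R →
      (∑ᶠ 𝔲 ∈ {𝔲 : Ideal (𝓞 K) | 0 < Ideal.absNorm 𝔲 ∧ Ideal.absNorm 𝔲 ≤ R},
        (1 : ℝ) / (Ideal.absNorm 𝔲 : ℝ)) ≤ c * Real.log R := by
  obtain ⟨C, hC, hcount⟩ := exists_ncard_absNorm_le_le_mul K
  refine ⟨3 * C, by positivity, fun R hR ↦ ?_⟩
  have hfin : {𝔲 : Ideal (𝓞 K) | 0 < Ideal.absNorm 𝔲 ∧ Ideal.absNorm 𝔲 ≤ R}.Finite :=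
    (Ideal.finite_setOfPred_absNorm_le R).subset fun _ hI ↦ hI.2
  rw [finsum_mem_eq_finite_toFinset_sum _ hfin]
  have hsum := sum_one_div_le_of_card_filter_le hfin.toFinset Ideal.absNorm (C := C)
    (by omega) (fun I hI ↦ hfin.mem_toFinset.mp hI) fun m hm _ ↦ by
      rw [← Set.ncard_coe_finset]
      refine le_trans ?_ (hcount m hm)
      exact_mod_cast Set.ncard_le_ncard (fun I hI ↦ (mem_filter.mp hI).2)
        (Ideal.finite_setOfPred_absNorm_le m)
  have hlog : 1 ≤ 2 * Real.log R := by
    have := Real.log_two_gt_d9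
    have : Real.log 2 ≤ Real.log R := Real.log_le_log (by norm_num) (by exact_mod_cast hR)
    linarith
  calc _ ≤ C * (1 + Real.log R) := hsum
    _ ≤ 3 * C * Real.log R := by nlinarith
end

section
/- Let K be an algebraic number field and C > 0. There exists a constant d′ = d′(C,K) > 0 such that for all X ≥ 2, Σ_{𝔞 ⊆ O_K, 0 < |𝔞| ≤ X} τ(𝔞)^C/|𝔞| ≪_{C,K} (log X)^{d′}, where the sum is over non-zero integral ideals 𝔞 of O_K of absolute norm at most X and τ(𝔞) is the number of integral ideals dividing 𝔞. -/
open NumberField Filter Topology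

noncomputable section

/-- The divisor function on ideals: the number of integral ideals dividing `𝔞`. -/
def tauIdeal (K : Type) [Field K] [NumberField K] (𝔞 : Ideal (𝓞 K)) : ℕ :=
  Nat.card {I : Ideal (𝓞 K) // I ∣ 𝔞}

/-!
Write `n` for the rank of `𝓞 K` and `d` for the divisor function on `ℕ`. Every ideal `𝔞` divides
`(N𝔞)`, and `(p)` has at most `n` prime factors because their norms multiply to `pⁿ`; so
`τ(𝔞) ≤ d(N𝔞)ⁿ`, and likewise at most `d(m)ⁿ` ideals have norm `m`. The sum is therefore at
most `∑_{m ≤ X} d(m)^J / m` for some `J`. Since `d(ab) ≤ d(a) d(b)`, the `J + 1` sum is at most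
the square of the `J` sum, and induction from the harmonic sum gives `≪ (log X)^(2^J)`.
-/

open Finset

namespace Nat

theorem card_divisors_mul_le (m n : ℕ) : #(m * n).divisors ≤ #m.divisors * #n.divisors := by
  rw [divisors_mul]
  exact card_mul_le

theorem card_divisorsAntidiagonal (n : ℕ) : #n.divisorsAntidiagonal = #n.divisors := by
  rw [← map_div_right_divisors, card_map]

theorem sum_Icc_sum_divisorsAntidiagonal_le {f g : ℕ → ℝ} (hf : ∀ n, 0 ≤ f n)
    (hg : ∀ n, 0 ≤ g n) (N : ℕ) :
    ∑ n ∈ Icc 1 N, ∑ p ∈ n.divisorsAntidiagonal, f p.1 * g p.2 ≤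
      (∑ n ∈ Icc 1 N, f n) * ∑ n ∈ Icc 1 N, g n := by
  have hdisj : (Icc 1 N : Set ℕ).PairwiseDisjoint divisorsAntidiagonal := fun m _ n _ hmn =>
    disjoint_left.2 fun p hm hn => hmn <| (mem_divisorsAntidiagonal.1 hm).1.symm.trans
      (mem_divisorsAntidiagonal.1 hn).1
  have hsub : (Icc 1 N).biUnion divisorsAntidiagonal ⊆ Icc 1 N ×ˢ Icc 1 N := by
    simp only [subset_iff, mem_biUnion, mem_divisorsAntidiagonal, mem_product, mem_Icc]
    rintro ⟨a, b⟩ ⟨n, hn, rfl, -⟩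
    have ha : a ≠ 0 := by rintro rfl; omega
    have hb : b ≠ 0 := by rintro rfl; omega
    exact ⟨⟨by omega, (Nat.le_mul_of_pos_right a (by omega)).trans hn.2⟩,
      by omega, (Nat.le_mul_of_pos_left b (by omega)).trans hn.2⟩
  rw [← sum_biUnion hdisj, sum_mul_sum, ← sum_product']
  exact sum_le_sum_of_subset_of_nonneg hsub fun p _ _ => mul_nonneg (hf _) (hg _)

end Nat

theorem card_divisors_pow_succ_div_le (J n : ℕ) :
    (#n.divisors : ℝ) ^ (J + 1) / n ≤
      ∑ p ∈ n.divisorsAntidiagonal,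
        (#p.1.divisors : ℝ) ^ J / p.1 * ((#p.2.divisors : ℝ) ^ J / p.2) := by
  calc (#n.divisors : ℝ) ^ (J + 1) / n
      = ∑ _p ∈ n.divisorsAntidiagonal, (#n.divisors : ℝ) ^ J / n := by
        rw [sum_const, Nat.card_divisorsAntidiagonal, nsmul_eq_mul]
        ring
    _ ≤ _ := sum_le_sum fun p hp => by
        obtain ⟨rfl, -⟩ := Nat.mem_divisorsAntidiagonal.1 hp
        rw [div_mul_div_comm, ← mul_pow, Nat.cast_mul]
        gcongr
        exact_mod_cast Nat.card_divisors_mul_le p.1 p.2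

theorem sum_card_divisors_pow_succ_div_le_sq (J N : ℕ) :
    ∑ n ∈ Icc 1 N, (#n.divisors : ℝ) ^ (J + 1) / n ≤
      (∑ n ∈ Icc 1 N, (#n.divisors : ℝ) ^ J / n) ^ 2 := by
  have hnonneg (n : ℕ) : 0 ≤ (#n.divisors : ℝ) ^ J / n := by positivity
  rw [sq]
  exact (sum_le_sum fun n _ => card_divisors_pow_succ_div_le J n).trans
    (Nat.sum_Icc_sum_divisorsAntidiagonal_le hnonneg hnonneg N)

theorem sum_Icc_floor_inv_le_three_mul_log {X : ℝ} (hX : 2 ≤ X) :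
    ∑ n ∈ Icc 1 ⌊X⌋₊, (n : ℝ)⁻¹ ≤ 3 * Real.log X := by
  have hlog : 1 / 2 ≤ Real.log X := by
    linarith [Real.log_two_gt_d9, Real.log_le_log two_pos hX]
  have := harmonic_floor_le_one_add_log X (by linarith)
  simp only [harmonic_eq_sum_Icc, Rat.cast_sum, Rat.cast_inv, Rat.cast_natCast] at this
  linarith

theorem exists_sum_card_divisors_pow_div_le_log_pow (J : ℕ) :
    ∃ c > 0, ∀ X : ℝ, 2 ≤ X →
      ∑ n ∈ Icc 1 ⌊X⌋₊, (#n.divisors : ℝ) ^ J / n ≤ c * Real.log X ^ 2 ^ J := by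
  induction J with
  | zero => exact ⟨3, by norm_num, fun X hX => by simpa using sum_Icc_floor_inv_le_three_mul_log hX⟩
  | succ J ih =>
    obtain ⟨c, hc, h⟩ := ih
    refine ⟨c ^ 2, by positivity, fun X hX => ?_⟩
    calc _ ≤ (∑ n ∈ Icc 1 ⌊X⌋₊, (#n.divisors : ℝ) ^ J / n) ^ 2 :=
          sum_card_divisors_pow_succ_div_le_sq J _
      _ ≤ (c * Real.log X ^ 2 ^ J) ^ 2 :=
          pow_le_pow_left₀ (sum_nonneg fun n _ => by positivity) (h X hX) 2
      _ = c ^ 2 * Real.log X ^ 2 ^ (J + 1) := by ring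

namespace UniqueFactorizationMonoid

variable {α : Type*} [CommMonoidWithZero α] [Unique αˣ]

theorem card_subtype_dvd_one : Nat.card {x : α // x ∣ 1} = 1 :=
  Nat.card_eq_one_iff_unique.2
    ⟨⟨fun x y => Subtype.ext <| (isUnit_iff_eq_one.1 (isUnit_of_dvd_one x.2)).trans
      (isUnit_iff_eq_one.1 (isUnit_of_dvd_one y.2)).symm⟩, ⟨⟨1, dvd_rfl⟩⟩⟩

variable [UniqueFactorizationMonoid α]

theorem finite_subtype_dvd {a : α} (ha : a ≠ 0) : Finite {x // x ∣ a} :=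
  @Finite.of_fintype _ (fintypeSubtypeDvd a ha)

theorem card_subtype_dvd_le_of_dvd {a b : α} (hab : a ∣ b) (hb : b ≠ 0) :
    Nat.card {x // x ∣ a} ≤ Nat.card {x // x ∣ b} :=
  have := finite_subtype_dvd hb
  Nat.card_le_card_of_injective (fun x => ⟨x.1, x.2.trans hab⟩) fun _ _ h =>
    Subtype.ext (Subtype.mk.inj h)

theorem card_subtype_dvd_mul_le {a b : α} (ha : a ≠ 0) (hb : b ≠ 0) :
    Nat.card {x // x ∣ a * b} ≤ Nat.card {x // x ∣ a} * Nat.card {x // x ∣ b} := by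
  have := finite_subtype_dvd ha
  have := finite_subtype_dvd hb
  rw [← Nat.card_prod]
  refine Nat.card_le_card_of_surjective (fun d => ⟨d.1.1 * d.2.1, mul_dvd_mul d.1.2 d.2.2⟩) ?_
  rintro ⟨x, hx⟩
  obtain ⟨y, z, hy, hz, rfl⟩ := exists_dvd_and_dvd_of_dvd_mul hx
  exact ⟨(⟨y, hy⟩, ⟨z, hz⟩), rfl⟩

theorem card_subtype_dvd_prime_pow_le {p : α} (hp : Prime p) (k : ℕ) :
    Nat.card {x // x ∣ p ^ k} ≤ k + 1 := by
  refine (Nat.card_le_card_of_surjective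
    (fun i : Fin (k + 1) => ⟨p ^ (i : ℕ), pow_dvd_pow p (Nat.lt_succ_iff.1 i.2)⟩) ?_).trans_eq
    (Nat.card_fin _)
  rintro ⟨x, hx⟩
  obtain ⟨i, hi, hx⟩ := (dvd_prime_pow hp k).1 hx
  exact ⟨⟨i, Nat.lt_succ_of_le hi⟩, Subtype.ext (associated_iff_eq.1 hx).symm⟩

theorem card_subtype_dvd_multiset_prod_pow_le (k : ℕ) {s : Multiset α}
    (hs : ∀ p ∈ s, Prime p) : Nat.card {x // x ∣ s.prod ^ k} ≤ (k + 1) ^ Multiset.card s := by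
  induction s using Multiset.induction_on with
  | empty => simp [card_subtype_dvd_one]
  | cons p s ih =>
    have hp := hs p (Multiset.mem_cons_self p s)
    have hs' q (hq : q ∈ s) : Prime q := hs q (Multiset.mem_cons_of_mem hq)
    have : Nontrivial α := ⟨⟨p, 0, hp.ne_zero⟩⟩
    have hprod : s.prod ≠ 0 := Multiset.prod_ne_zero fun h0 => (hs' 0 h0).ne_zero rfl
    rw [Multiset.prod_cons, mul_pow, Multiset.card_cons, pow_succ']
    exact (card_subtype_dvd_mul_le (pow_ne_zero k hp.ne_zero) (pow_ne_zero k hprod)).trans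
      (Nat.mul_le_mul (card_subtype_dvd_prime_pow_le hp k) (ih hs'))

theorem card_subtype_dvd_pow_le {b : α} (hb : b ≠ 0) (k : ℕ) :
    Nat.card {x // x ∣ b ^ k} ≤ (k + 1) ^ Multiset.card (factors b) := by
  simpa only [associated_iff_eq.1 (factors_prod hb)] using
    card_subtype_dvd_multiset_prod_pow_le k fun p hp => prime_of_factor (a := b) p hp

end UniqueFactorizationMonoid

namespace Ideal

open UniqueFactorizationMonoid ArithmeticFunction Module
open scoped ArithmeticFunction.Omega

variable {S : Type*} [CommRing S] [IsDedekindDomain S] [Module.Free ℤ S]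

theorem dvd_span_absNorm (I : Ideal S) : I ∣ span {(absNorm I : S)} :=
  dvd_iff_le.2 ((span_singleton_le_iff_mem _).2 (absNorm_mem I))

variable [Module.Finite ℤ S]

theorem span_natCast_ne_bot {n : ℕ} (hn : n ≠ 0) : span {(n : S)} ≠ ⊥ := by
  rw [Ne, ← absNorm_eq_zero_iff, absNorm_span_natCast]
  exact pow_ne_zero _ hn

theorem card_factors_le_cardFactors_absNorm {I : Ideal S} (hI : I ≠ ⊥) :
    Multiset.card (factors I) ≤ Ω (absNorm I) := by
  have hprod : (factors I).prod = I := associated_iff_eq.1 (factors_prod hI)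
  have hN : ((factors I).map absNorm).prod ≠ 0 := by
    rw [← map_multiset_prod, hprod]
    exact mt absNorm_eq_zero_iff.1 hI
  have hΩ : ∀ n ∈ ((factors I).map absNorm).map Ω, 1 ≤ n := by
    simp only [Multiset.map_map, Multiset.mem_map, Function.comp_apply]
    rintro _ ⟨P, hP, rfl⟩
    have hP := prime_of_factor P hP
    refine cardFactors_pos_iff_one_lt.2 (lt_of_le_of_ne ?_ ?_)
    · exact Nat.one_le_iff_ne_zero.2 (mt absNorm_eq_zero_iff.1 hP.ne_zero)
    · exact fun h => hP.not_isUnit (isUnit_iff.2 (absNorm_eq_one_iff.1 h.symm))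
  calc Multiset.card (factors I) = Multiset.card (((factors I).map absNorm).map Ω) • 1 := by simp
    _ ≤ (((factors I).map absNorm).map Ω).sum := Multiset.card_nsmul_le_sum hΩ
    _ = Ω (absNorm I) := by rw [← cardFactors_multiset_prod hN, ← map_multiset_prod, hprod]

theorem card_factors_span_natCast_le {p : ℕ} (hp : p.Prime) :
    Multiset.card (factors (span {(p : S)})) ≤ finrank ℤ S := by
  simpa only [absNorm_span_natCast, cardFactors_apply_prime_pow hp] using
    card_factors_le_cardFactors_absNorm (span_natCast_ne_bot (S := S) hp.ne_zero)

theorem card_subtype_dvd_span_natCast_prime_pow_le {p : ℕ} (hp : p.Prime) (k : ℕ) :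
    Nat.card {I // I ∣ span {((p ^ k : ℕ) : S)}} ≤ (k + 1) ^ finrank ℤ S := by
  rw [Nat.cast_pow, ← span_singleton_pow]
  exact (card_subtype_dvd_pow_le (span_natCast_ne_bot hp.ne_zero) k).trans
    (Nat.pow_le_pow_right k.succ_pos (card_factors_span_natCast_le hp))

theorem card_subtype_dvd_span_natCast_le {n : ℕ} (hn : n ≠ 0) :
    Nat.card {I // I ∣ span {(n : S)}} ≤ #n.divisors ^ finrank ℤ S := by
  induction n using Nat.recOnPrimeCoprime with
  | zero => exact absurd rfl hn
  | prime_pow p k hp =>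
    rw [← sigma_zero_apply, sigma_zero_apply_prime_pow hp]
    exact card_subtype_dvd_span_natCast_prime_pow_le hp k
  | coprime a b _ _ hab iha ihb =>
    have ha : a ≠ 0 := left_ne_zero_of_mul hn
    have hb : b ≠ 0 := right_ne_zero_of_mul hn
    rw [Nat.cast_mul, ← span_singleton_mul_span_singleton, hab.card_divisors_mul, mul_pow]
    exact (card_subtype_dvd_mul_le (span_natCast_ne_bot ha) (span_natCast_ne_bot hb)).trans
      (Nat.mul_le_mul (iha ha) (ihb hb))

theorem card_subtype_dvd_le_card_divisors_absNorm {I : Ideal S} (hI : I ≠ ⊥) :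
    Nat.card {J // J ∣ I} ≤ #(absNorm I).divisors ^ finrank ℤ S := by
  have hN : absNorm I ≠ 0 := mt absNorm_eq_zero_iff.1 hI
  exact (card_subtype_dvd_le_of_dvd (dvd_span_absNorm I) (span_natCast_ne_bot hN)).trans
    (card_subtype_dvd_span_natCast_le hN)

theorem ncard_setOf_absNorm_eq_le {n : ℕ} (hn : n ≠ 0) :
    {I : Ideal S | absNorm I = n}.ncard ≤ #n.divisors ^ finrank ℤ S := by
  have hsub : {I : Ideal S | absNorm I = n} ⊆ {I | I ∣ span {(n : S)}} := by
    rintro I rfl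
    exact dvd_span_absNorm I
  have hfin : {I : Ideal S | I ∣ span {(n : S)}}.Finite :=
    Set.finite_coe_iff.1 (finite_subtype_dvd (span_natCast_ne_bot hn))
  exact (Set.ncard_le_ncard hsub hfin).trans
    ((Nat.card_coe_set_eq _).symm.trans_le (card_subtype_dvd_span_natCast_le hn))

theorem finsum_mem_le_sum_card_divisors_pow_mul [CharZero S] {g : Ideal S → ℝ} {f : ℕ → ℝ}
    (hf : ∀ n, 0 ≤ f n) {N : ℕ} (hg : ∀ I, absNorm I ∈ Icc 1 N → g I ≤ f (absNorm I)) :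
    ∑ᶠ I ∈ {I : Ideal S | absNorm I ∈ Icc 1 N}, g I ≤
      ∑ n ∈ Icc 1 N, (#n.divisors : ℝ) ^ finrank ℤ S * f n := by
  have hfin : {I : Ideal S | absNorm I ∈ Icc 1 N}.Finite :=
    (finite_setOfPred_absNorm_le N).subset fun I hI => show absNorm I ≤ N from (mem_Icc.1 hI).2
  rw [finsum_mem_eq_finite_toFinset_sum _ hfin]
  refine (sum_le_sum fun I hI => hg I (hfin.mem_toFinset.1 hI)).trans ?_
  rw [← sum_fiberwise_of_maps_to (g := absNorm) (t := Icc 1 N) fun I hI => hfin.mem_toFinset.1 hI]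
  refine sum_le_sum fun n hn => ?_
  have hfiber : #{I ∈ hfin.toFinset | absNorm I = n} ≤ #n.divisors ^ finrank ℤ S := by
    refine le_trans ?_ (ncard_setOf_absNorm_eq_le (S := S) (by grind))
    rw [← Set.ncard_coe_finset]
    exact Set.ncard_le_ncard (fun I hI => (mem_filter.1 hI).2) (finite_setOfPred_absNorm_eq n)
  calc ∑ I ∈ hfin.toFinset with absNorm I = n, f (absNorm I)
      = #{I ∈ hfin.toFinset | absNorm I = n} * f n := by
        rw [sum_congr rfl fun I hI => by rw [(mem_filter.1 hI).2], sum_const, nsmul_eq_mul]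
    _ ≤ _ := by gcongr; exacts [hf n, mod_cast hfiber]

end Ideal

open Ideal Module UniqueFactorizationMonoid

theorem tauIdeal_rpow_le_card_divisors_absNorm_pow {K : Type} [Field K] [NumberField K]
    {𝔞 : Ideal (𝓞 K)} (h𝔞 : 𝔞 ≠ ⊥) (C : ℝ) :
    (tauIdeal K 𝔞 : ℝ) ^ C ≤ (#(absNorm 𝔞).divisors : ℝ) ^ (finrank ℤ (𝓞 K) * ⌈C⌉₊) := by
  have : Finite {I // I ∣ 𝔞} := finite_subtype_dvd h𝔞
  have : Nonempty {I // I ∣ 𝔞} := ⟨⟨𝔞, dvd_rfl⟩⟩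
  have hτ : 1 ≤ (tauIdeal K 𝔞 : ℝ) := Nat.one_le_cast.2 Nat.card_pos
  have hle : (tauIdeal K 𝔞 : ℝ) ≤ (#(absNorm 𝔞).divisors : ℝ) ^ finrank ℤ (𝓞 K) := by
    exact_mod_cast card_subtype_dvd_le_card_divisors_absNorm h𝔞
  calc (tauIdeal K 𝔞 : ℝ) ^ C ≤ (tauIdeal K 𝔞 : ℝ) ^ (⌈C⌉₊ : ℝ) :=
        Real.rpow_le_rpow_of_exponent_le hτ (Nat.le_ceil C)
    _ = (tauIdeal K 𝔞 : ℝ) ^ ⌈C⌉₊ := Real.rpow_natCast _ _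
    _ ≤ _ := by rw [pow_mul]; gcongr

theorem sum_tau_pow_div_norm_le_general
    (K : Type) [Field K] [NumberField K] (C : ℝ) :
    ∃ d' > 0, ∃ c > 0, ∀ X : ℝ, 2 ≤ X →
      (∑ᶠ 𝔞 ∈ {𝔞 : Ideal (𝓞 K) | 0 < Ideal.absNorm 𝔞 ∧ (Ideal.absNorm 𝔞 : ℝ) ≤ X},
        (tauIdeal K 𝔞 : ℝ) ^ C / (Ideal.absNorm 𝔞 : ℝ)) ≤ c * Real.log X ^ d' := by
  set r := finrank ℤ (𝓞 K)
  obtain ⟨c, hc, hsum⟩ := exists_sum_card_divisors_pow_div_le_log_pow (r * (⌈C⌉₊ + 1))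
  refine ⟨2 ^ (r * (⌈C⌉₊ + 1)), by positivity, c, hc, fun X hX => ?_⟩
  have hset : {𝔞 : Ideal (𝓞 K) | 0 < absNorm 𝔞 ∧ (absNorm 𝔞 : ℝ) ≤ X} =
      {𝔞 | absNorm 𝔞 ∈ Icc 1 ⌊X⌋₊} := by
    ext 𝔞
    simp [Nat.le_floor_iff (by linarith : 0 ≤ X), Nat.one_le_iff_ne_zero, Nat.pos_iff_ne_zero]
  rw [hset]
  calc _ ≤ ∑ n ∈ Icc 1 ⌊X⌋₊, (#n.divisors : ℝ) ^ r * ((#n.divisors : ℝ) ^ (r * ⌈C⌉₊) / n) := by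
        refine finsum_mem_le_sum_card_divisors_pow_mul (fun n => by positivity) fun 𝔞 h𝔞 => ?_
        have h𝔞 : 𝔞 ≠ ⊥ := by grind [absNorm_eq_zero_iff]
        gcongr
        exact tauIdeal_rpow_le_card_divisors_absNorm_pow h𝔞 C
    _ = ∑ n ∈ Icc 1 ⌊X⌋₊, (#n.divisors : ℝ) ^ (r * (⌈C⌉₊ + 1)) / n :=
        sum_congr rfl fun n _ => by ring
    _ ≤ _ := hsum X hX

/-- A divisor-power sum estimate: `∑_{0 < |𝔞| ≤ X} τ(𝔞)^C / |𝔞| ≪_{C,K} (log X)^{d'}`. -/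
theorem sum_tau_pow_div_norm_le
    (K : Type) [Field K] [NumberField K] (C : ℝ) (hC : 0 < C) :
    ∃ d' > 0, ∃ c > 0, ∀ X : ℝ, 2 ≤ X →
      (∑ᶠ 𝔞 ∈ {𝔞 : Ideal (𝓞 K) | 0 < Ideal.absNorm 𝔞 ∧ (Ideal.absNorm 𝔞 : ℝ) ≤ X},
        (tauIdeal K 𝔞 : ℝ) ^ C / (Ideal.absNorm 𝔞 : ℝ)) ≤ c * Real.log X ^ d' :=
  sum_tau_pow_div_norm_le_general K C

end
end
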